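/- arXiv:1508.05696 — 2 statements merged into one kernel-verified Lean document; each statement's English description precedes it below -/
import Mathlib

section
/- Let E and R be commutative associative algebras over a field F such that E is finite-dimensional étale over F. If the quadratic Jordan algebra structures E⁺ and R⁺ coincide (i.e., E and R have the same underlying vector space, the same unit, and x²y computed in E equals x²y computed in R for all x, y), then E = R as commutative associative algebras. -/
/-!
Since `x² y` is the same for both products, `mul'` is linear over the subalgebra `S` generated by
the squares. If `2` is invertible, `S` is everything, because
`x = ((x + 1)² - x² - 1) / 2`. In characteristic `2`, `A` is unramified over `S`, so there is
`t ∈ A ⊗[S] A` with `μ t = 1` killing every `1 ⊗ a - a ⊗ 1`; and since squaring is additive and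
`b²` is a scalar, `ξ² = (μ ξ)² ⊗ 1`, so `t² = 1`. Hence `a ⊗ b = ab ⊗ 1`, and the `S`-bilinear map
`mul'` factors through `μ`, which forces `mul' a b = mul' (ab) 1 = ab`.
-/

open scoped TensorProduct

namespace Algebra.TensorProduct

theorem mul_self_eq_lmul'_mul_self_tmul_one {R S : Type*} [CommRing R] [CommRing S]
    [Algebra R S] (h2 : (2 : S) = 0) (hsq : ∀ s : S, s * s ∈ (algebraMap R S).range)
    (ξ : S ⊗[R] S) : ξ * ξ = (lmul' R ξ * lmul' R ξ) ⊗ₜ[R] 1 := by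
  have h2' : (2 : S ⊗[R] S) = 0 := by
    rw [← map_ofNat (algebraMap S (S ⊗[R] S)) 2, h2, map_zero]
  induction ξ using TensorProduct.induction_on with
  | zero => simp
  | tmul a b =>
    obtain ⟨r, hr⟩ := hsq b
    rw [tmul_mul_tmul, lmul'_apply_tmul, ← hr, ← mul_one (algebraMap R S r), ← Algebra.smul_def,
      TensorProduct.tmul_smul, TensorProduct.smul_tmul', Algebra.smul_def, hr]
    ring_nf
  | add ξ η ihξ ihη =>
    calc (ξ + η) * (ξ + η) = ξ * ξ + η * η + 2 * (ξ * η) := by ring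
      _ = _ := by
        rw [h2', zero_mul, add_zero, ihξ, ihη, map_add, ← TensorProduct.add_tmul]
        congr 1
        linear_combination -(lmul' R ξ * lmul' R η) * h2

theorem tmul_eq_mul_tmul_one {R S : Type*} [CommRing R] [CommRing S]
    [Algebra R S] [EssFiniteType R S] [FormallyUnramified R S] (h2 : (2 : S) = 0)
    (hsq : ∀ s : S, s * s ∈ (algebraMap R S).range) (a b : S) :
    a ⊗ₜ[R] b = (a * b) ⊗ₜ[R] 1 := by
  obtain ⟨t, ht_ann, ht_one⟩ := FormallyUnramified.iff_exists_tensorProduct.mp ‹_›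
  have ht_sq : t * t = 1 := by
    rw [mul_self_eq_lmul'_mul_self_tmul_one h2 hsq, ht_one, mul_one, one_def]
  have hb : (1 : S) ⊗ₜ[R] b = b ⊗ₜ[R] 1 := by
    rw [← sub_eq_zero, ← mul_one (_ - _), ← ht_sq, ← mul_assoc, ht_ann, zero_mul]
  calc a ⊗ₜ[R] b = (a ⊗ₜ[R] 1) * (1 ⊗ₜ[R] b) := by simp
    _ = (a * b) ⊗ₜ[R] 1 := by rw [hb, tmul_mul_tmul, mul_one]

end Algebra.TensorProduct

abbrev adjoinSquares (F A : Type*) [CommRing F] [CommRing A] [Algebra F A] : Subalgebra F A :=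
  Algebra.adjoin F (Set.range fun x : A => x * x)

theorem mem_adjoinSquares_of_two_ne_zero {F A : Type*} [Field F] [CommRing A] [Algebra F A]
    (h2 : (2 : F) ≠ 0) (x : A) : x ∈ adjoinSquares F A := by
  have hsq : ∀ y : A, y * y ∈ adjoinSquares F A := fun y => Algebra.subset_adjoin ⟨y, rfl⟩
  have hx : x = (2 : F)⁻¹ • ((x + 1) * (x + 1) - x * x - 1 * 1) := by
    rw [eq_inv_smul_iff₀ h2, two_smul]
    ring
  rw [hx]
  exact Subalgebra.smul_mem _ (sub_mem (sub_mem (hsq _) (hsq _)) (hsq _)) _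

section SecondMultiplication

variable {F A : Type*} [CommRing F] [CommRing A] [Algebra F A] {mul' : A → A → A}

theorem mul'_self (h_comm : ∀ x y : A, mul' x y = mul' y x) (h_one : ∀ x : A, mul' 1 x = x)
    (hU : ∀ x y : A, x * x * y = mul' (mul' x x) y) (x : A) : mul' x x = x * x := by
  rw [← mul_one (x * x), hU, h_comm (mul' x x), h_one]

theorem mul'_mul_left_of_mem_adjoinSquares
    (h_assoc : ∀ x y z : A, mul' (mul' x y) z = mul' x (mul' y z))
    (h_comm : ∀ x y : A, mul' x y = mul' y x)
    (h_one : ∀ x : A, mul' 1 x = x)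
    (h_add : ∀ x y z : A, mul' x (y + z) = mul' x y + mul' x z)
    (h_smul : ∀ (a : F) (x y : A), mul' x (a • y) = a • mul' x y)
    (hU : ∀ x y : A, x * x * y = mul' (mul' x x) y)
    {s : A} (hs : s ∈ adjoinSquares F A) (a b : A) :
    mul' (s * a) b = s * mul' a b := by
  have hsq : ∀ x y : A, mul' (x * x) y = x * x * y := fun x y => by
    rw [hU, mul'_self h_comm h_one hU]
  induction hs using Algebra.adjoin_induction generalizing a b with
  | mem x hx =>
    obtain ⟨z, rfl⟩ := hx
    rw [← hsq z a, h_assoc, hsq]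
  | algebraMap r =>
    rw [← Algebra.smul_def, ← Algebra.smul_def, h_comm, h_smul, h_comm]
  | add x y _ _ ihx ihy =>
    rw [add_mul, h_comm, h_add, h_comm b, h_comm b, ihx, ihy, add_mul]
  | mul x y _ _ ihx ihy =>
    rw [mul_assoc, ihx, ihy, mul_assoc]

theorem mul'_eq_mul_of_tmul_eq_mul_tmul_one {S : Subalgebra F A}
    (h_comm : ∀ x y : A, mul' x y = mul' y x) (h_one : ∀ x : A, mul' 1 x = x)
    (h_add : ∀ x y z : A, mul' x (y + z) = mul' x y + mul' x z)
    (h_balanced : ∀ s ∈ S, ∀ a b : A, mul' (s * a) b = s * mul' a b)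
    (h_tmul : ∀ a b : A, a ⊗ₜ[S] b = (a * b) ⊗ₜ[S] 1) (x y : A) : mul' x y = x * y := by
  let μ : A →ₗ[S] A →ₗ[S] A := LinearMap.mk₂ S mul'
    (fun a a' b => by rw [h_comm, h_add, h_comm b, h_comm b])
    (fun s a b => h_balanced s s.2 a b)
    h_add
    (fun s a b => by rw [h_comm, Subalgebra.smul_def, smul_eq_mul, h_balanced s s.2, h_comm]; rfl)
  calc mul' x y = TensorProduct.lift μ (x ⊗ₜ[S] y) := rfl
    _ = mul' (x * y) 1 := by rw [h_tmul]; rfl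
    _ = x * y := by rw [h_comm, h_one]

end SecondMultiplication

/-- Let `E` and `R` be commutative associative algebras over a field `F` with the
same underlying vector space (here: the same type `A`, with the same addition, scalar action and
the same unit `1`), such that `E` is finite-dimensional étale over `F`.  `E` is the algebra given
by the ambient `CommRing`/`Algebra` structure and `R` is given by a second multiplication `mul'`.
If the quadratic Jordan structures `E⁺` and `R⁺` coincide, i.e. `x² y` computed in `E` equals
`x² y` computed in `R` for all `x y`, then `E = R` as commutative associative algebras, i.e. the
two multiplications coincide. -/
theorem stmt_0 (F A : Type) [Field F] [CommRing A] [Algebra F A]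
    [Module.Finite F A] [Algebra.Etale F A]
    (mul' : A → A → A)
    (h_assoc : ∀ x y z : A, mul' (mul' x y) z = mul' x (mul' y z))
    (h_comm : ∀ x y : A, mul' x y = mul' y x)
    (h_one : ∀ x : A, mul' 1 x = x)
    (h_add : ∀ x y z : A, mul' x (y + z) = mul' x y + mul' x z)
    (h_smul : ∀ (a : F) (x y : A), mul' x (a • y) = a • mul' x y)
    (hU : ∀ x y : A, x * x * y = mul' (mul' x x) y) :
    ∀ x y : A, mul' x y = x * y := by
  have h_balanced : ∀ s ∈ adjoinSquares F A, ∀ a b : A, mul' (s * a) b = s * mul' a b :=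
    fun s hs => mul'_mul_left_of_mem_adjoinSquares h_assoc h_comm h_one h_add h_smul hU hs
  by_cases h2 : (2 : F) = 0
  · have h2A : (2 : A) = 0 := by rw [← map_ofNat (algebraMap F A) 2, h2, map_zero]
    have : Algebra.FormallyUnramified (adjoinSquares F A) A := .of_restrictScalars F _ A
    have : Module.Finite (adjoinSquares F A) A := .of_restrictScalars_finite F _ A
    exact mul'_eq_mul_of_tmul_eq_mul_tmul_one h_comm h_one h_add h_balanced
      (Algebra.TensorProduct.tmul_eq_mul_tmul_one h2A
        fun a => ⟨⟨a * a, Algebra.subset_adjoin ⟨a, rfl⟩⟩, rfl⟩)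
  · intro x y
    simpa [h_one] using h_balanced x (mem_adjoinSquares_of_two_ne_zero h2 x) 1 y
end

section
/- Let F be an infinite field and E a cubic étale subalgebra of diagonal matrices in Mat₃(F). Then for any u₀ generating E (F[u₀] = E), there exists α ∈ F^× such that the element y := u₀ + α j₁ in the first Tits construction J(E, 1) = Mat₃(F)⁺ generates a cubic étale subalgebra F[y]; consequently Mat₃(F)⁺ is generated as a cubic Jordan algebra by two cubic étale subalgebras, namely E and F[y]. In particular, the discriminant polynomial Δ_y = Δ_{u₀} − C·α³ − 27α⁶ (for a constant C depending on u₀) is not identically zero as a polynomial in α, so a suitable α exists over any algebraically closed field. -/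
/-!
Since `F[diag d]` contains every diagonal matrix, the entries of `d` are distinct, so
`p = ∏ (X - d i)` is separable and `p' ≠ 0`. A multiple root of `p - c` is a root `r` of `p'`
with `c = p r`, so `p - c` is separable for all but finitely many `c`, and over an infinite
field some `α ≠ 0` makes `p - α³` separable. This is the characteristic polynomial of
`y = diag d + α j₁`, and it is also the minimal polynomial because `1, y, y²` are independent
when `α ≠ 0`; hence `F[y]` is cubic étale. Finally `j₁ = α⁻¹ (y - diag d)`, and the Jordan
triple products `{eᵢᵢ, j₁, eᵢ₊₁,ᵢ₊₁} = eᵢ,ᵢ₊₁` and `{eᵢ,ᵢ₊₁, 1, eᵢ₊₁,ᵢ₊₂} = eᵢ,ᵢ₊₂` produce all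
matrix units.
-/

/-- The cyclic permutation matrix `P = j₁` realizing `Mat₃(F)⁺` as the first Tits construction
`J(E,1) = E ⊕ E j₁ ⊕ E j₂` over the algebra `E` of diagonal matrices. -/
def cyc (F : Type) [Field F] : Matrix (Fin 3) (Fin 3) F :=
  Matrix.of fun i j => if j = i + 1 then 1 else 0

open Polynomial Matrix

namespace Polynomial

variable {F : Type*} [Field F]

theorem finite_setOf_not_separable_sub_C {p : F[X]} (hp : derivative p ≠ 0) :
    {c : F | ¬(p - C c).Separable}.Finite := by
  let K := AlgebraicClosure F
  refine (((p.derivative.rootSet_finite K).image fun a => aeval a p).preimage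
    (algebraMap F K).injective.injOn).subset fun c hc => ?_
  rw [Set.mem_ofPred_eq, separable_def, isCoprime_iff_aeval_ne_zero_of_isAlgClosed F K] at hc
  push Not at hc
  obtain ⟨a, hpc, hp'⟩ := hc
  rw [derivative_sub, derivative_C, sub_zero] at hp'
  refine ⟨a, mem_rootSet.2 ⟨hp, hp'⟩, ?_⟩
  rwa [map_sub, aeval_C, sub_eq_zero] at hpc

theorem exists_ne_zero_separable_sub_C_pow [Infinite F] {p : F[X]} (hp : derivative p ≠ 0)
    {n : ℕ} (hn : 0 < n) : ∃ a : F, a ≠ 0 ∧ (p - C (a ^ n)).Separable := by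
  have hbad : ((· ^ n) ⁻¹' {c : F | ¬(p - C c).Separable}).Finite :=
    (finite_setOf_not_separable_sub_C hp).preimage' fun c _ =>
      (nthRoots n c).finite_toSet.subset fun a ha => by
        simpa [mem_nthRoots hn] using ha
  obtain ⟨a, ha⟩ := (hbad.union (Set.finite_singleton 0)).exists_notMem
  simp only [Set.mem_union, Set.mem_preimage, Set.mem_ofPred_eq, Set.mem_singleton_iff,
    not_or, not_not] at ha
  exact ⟨a, ha.2, ha.1⟩

theorem derivative_prod_X_sub_C_ne_zero {ι : Type*} [Fintype ι] [Nonempty ι] {d : ι → F}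
    (hd : Function.Injective d) : derivative (∏ i, (X - C (d i))) ≠ 0 := by
  obtain ⟨i⟩ := ‹Nonempty ι›
  have hroot : aeval (d i) (∏ k, (X - C (d k))) = 0 := by
    simp [Finset.prod_eq_zero (Finset.mem_univ i)]
  intro h
  simpa [h] using (separable_prod_X_sub_C_iff.2 hd).aeval_derivative_ne_zero hroot

end Polynomial

section Adjoin

variable {F A : Type*} [Field F] [Ring A] [Algebra F A] {x : A}

theorem Algebra.toSubmodule_adjoin_singleton_eq_span_pow (hx : IsIntegral F x) :
    Subalgebra.toSubmodule (Algebra.adjoin F {x}) =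
      Submodule.span F (Set.range fun i : Fin (minpoly F x).natDegree => x ^ (i : ℕ)) := by
  apply le_antisymm
  · intro z hz
    rw [Subalgebra.mem_toSubmodule, Algebra.adjoin_singleton_eq_range_aeval] at hz
    obtain ⟨q, rfl⟩ := hz
    exact hx.mem_span_pow ⟨q, rfl⟩
  · rw [Submodule.span_le, Set.range_subset_iff]
    exact fun i => pow_mem (Algebra.self_mem_adjoin_singleton F x) _

theorem Algebra.finrank_adjoin_singleton (hx : IsIntegral F x) :
    Module.finrank F (Algebra.adjoin F {x}) = (minpoly F x).natDegree := by
  rw [← Subalgebra.finrank_toSubmodule, toSubmodule_adjoin_singleton_eq_span_pow hx,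
    finrank_span_eq_card (linearIndependent_pow x), Fintype.card_fin]

theorem le_natDegree_minpoly_of_linearIndependent_pow (hx : IsIntegral F x) {n : ℕ}
    (h : LinearIndependent F fun i : Fin n => x ^ (i : ℕ)) : n ≤ (minpoly F x).natDegree := by
  let powers (m : ℕ) : Fin m → A := fun i => x ^ (i : ℕ)
  have hle : Submodule.span F (Set.range (powers n)) ≤
      Submodule.span F (Set.range (powers (minpoly F x).natDegree)) := by
    rw [Submodule.span_le, Set.range_subset_iff]
    exact fun i => hx.mem_span_pow ⟨X ^ (i : ℕ), by simp [powers]⟩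
  have := FiniteDimensional.span_of_finite F (Set.finite_range (powers (minpoly F x).natDegree))
  have := Submodule.finrank_mono hle
  rwa [finrank_span_eq_card h, finrank_span_eq_card (linearIndependent_pow x), Fintype.card_fin,
    Fintype.card_fin] at this

end Adjoin

theorem Matrix.injective_of_diagonal_mem_adjoin {n R : Type*} [Fintype n] [DecidableEq n]
    [CommRing R] [Nontrivial R] {d : n → R}
    (h : ∀ x : n → R, diagonal x ∈ Algebra.adjoin R {diagonal d}) : Function.Injective d := by
  intro i j hij
  have hle : Algebra.adjoin R {d} ≤
      AlgHom.equalizer (Pi.evalAlgHom R (fun _ => R) i) (Pi.evalAlgHom R (fun _ => R) j) :=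
    AlgHom.adjoin_le_equalizer _ _ (by simpa using hij)
  have hmem : Pi.single i 1 ∈ Algebra.adjoin R {d} := by
    have := h (Pi.single i 1)
    rw [← diagonalAlgHom_apply R, ← diagonalAlgHom_apply R, ← AlgHom.map_adjoin_singleton]
      at this
    obtain ⟨z, hz, hzx⟩ := this
    rwa [← diagonal_injective hzx]
  by_contra hne
  simpa [Pi.single_apply, Ne.symm hne] using hle hmem

theorem Submodule.mul_mul_add_mul_mul_mem {R A : Type*} [Ring R] [Ring A] [Module R A]
    {S : Submodule R A} (hU : ∀ a ∈ S, ∀ b ∈ S, a * b * a ∈ S) {a b c : A} (ha : a ∈ S)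
    (hb : b ∈ S) (hc : c ∈ S) : a * b * c + c * b * a ∈ S := by
  have key : a * b * c + c * b * a = (a + c) * b * (a + c) - a * b * a - c * b * c := by
    noncomm_ring
  rw [key]
  exact sub_mem (sub_mem (hU _ (add_mem ha hc) _ hb) (hU _ ha _ hb)) (hU _ hc _ hb)

section Cyc

variable {F : Type} [Field F]

theorem charpoly_diagonal_add_smul_cyc (d : Fin 3 → F) (α : F) :
    (diagonal d + α • cyc F).charpoly = ∏ i, (X - C (d i)) - C (α ^ 3) := by
  simp [charpoly, det_fin_three, cyc, Fin.prod_univ_three]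
  ring

theorem linearIndependent_pow_diagonal_add_smul_cyc {d : Fin 3 → F} {α : F} (hα : α ≠ 0) :
    LinearIndependent F fun i : Fin 3 => (diagonal d + α • cyc F) ^ (i : ℕ) := by
  rw [Fintype.linearIndependent_iff]
  intro c hc
  -- the first row of `c₀ + c₁ y + c₂ y²` is triangular in `c`, ending in `c₂ α²`
  have h0 := congrFun (congrFun hc 0) 0
  have h1 := congrFun (congrFun hc 0) 1
  have h2 := congrFun (congrFun hc 0) 2
  simp [pow_two, Matrix.mul_apply, Fin.sum_univ_three, cyc, diagonal_apply] at h0 h1 h2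
  have hc2 : c 2 = 0 := h2.resolve_right hα
  have hc1 : c 1 = 0 := by simpa [hc2, hα] using h1
  have hc0 : c 0 = 0 := by simpa [hc1, hc2] using h0
  intro i
  fin_cases i <;> assumption

theorem minpoly_diagonal_add_smul_cyc {d : Fin 3 → F} {α : F} (hα : α ≠ 0) :
    minpoly F (diagonal d + α • cyc F) = (diagonal d + α • cyc F).charpoly := by
  have hint : IsIntegral F (diagonal d + α • cyc F) := .of_finite F _
  refine (eq_of_monic_of_dvd_of_natDegree_le (minpoly.monic hint) (charpoly_monic _)
    (minpoly_dvd_charpoly _) ?_).symm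
  simpa using le_natDegree_minpoly_of_linearIndependent_pow hint
    (linearIndependent_pow_diagonal_add_smul_cyc hα)

theorem single_mem_of_diagonal_mem_of_cyc_mem {S : Submodule F (Matrix (Fin 3) (Fin 3) F)}
    (hdiag : ∀ x : Fin 3 → F, diagonal x ∈ S) (hcyc : cyc F ∈ S)
    (hU : ∀ a ∈ S, ∀ b ∈ S, a * b * a ∈ S) (i j : Fin 3) : single i j 1 ∈ S := by
  have hdiag' (i : Fin 3) : single i i (1 : F) ∈ S := diagonal_single i (1 : F) ▸ hdiag _
  have hsucc (i : Fin 3) : single i (i + 1) (1 : F) ∈ S := by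
    have := Submodule.mul_mul_add_mul_mul_mem hU (hdiag' i) hcyc (hdiag' (i + 1))
    have hne : i ≠ i + 1 + 1 := by fin_cases i <;> decide
    simpa [cyc, hne] using this
  have hsucc2 (i : Fin 3) : single i (i + 2) (1 : F) ∈ S := by
    have h1 : (1 : Matrix (Fin 3) (Fin 3) F) ∈ S := by simpa using hdiag 1
    have := Submodule.mul_mul_add_mul_mul_mem hU (hsucc i) h1 (hsucc (i + 1))
    have hne : i + 1 + 1 ≠ i := by fin_cases i <;> decide
    simpa [hne, add_assoc, one_add_one_eq_two] using this
  obtain h | h | h : j = i ∨ j = i + 1 ∨ j = i + 2 := by fin_cases i <;> fin_cases j <;> decide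
  exacts [h ▸ hdiag' i, h ▸ hsucc i, h ▸ hsucc2 i]

theorem eq_top_of_diagonal_mem_of_cyc_mem {S : Submodule F (Matrix (Fin 3) (Fin 3) F)}
    (hdiag : ∀ x : Fin 3 → F, diagonal x ∈ S) (hcyc : cyc F ∈ S)
    (hU : ∀ a ∈ S, ∀ b ∈ S, a * b * a ∈ S) : S = ⊤ := by
  refine eq_top_iff.2 fun M _ => ?_
  rw [matrix_eq_sum_single M]
  refine Submodule.sum_mem _ fun i _ => Submodule.sum_mem _ fun j _ => ?_
  simpa [smul_single] using
    S.smul_mem (M i j) (single_mem_of_diagonal_mem_of_cyc_mem hdiag hcyc hU i j)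

end Cyc

/-- Let `F` be an infinite field and `E` the cubic étale subalgebra of diagonal
matrices in `Mat₃(F)`.  For any `u₀ = diagonal d` generating `E` (i.e. `F[u₀] ⊇ E`), there is
`α ∈ F^×` such that `y := u₀ + α j₁` (with `j₁` the cyclic permutation matrix) generates a cubic
étale subalgebra `F[y]` (its minimal polynomial is separable of degree 3, so
`Module.finrank F F[y] = 3`), and `Mat₃(F)⁺` is generated as a cubic Jordan algebra by the two
cubic étale subalgebras `E` and `F[y]`: every `F`-subspace containing `1`, all diagonal
matrices, and `F[y]`, and closed under the Jordan `U`-operator `U_a b = a b a`, is all of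
`Mat₃(F)`. -/
theorem stmt_9 (F : Type) [Field F] [Infinite F]
    (d : Fin 3 → F)
    (hgen : ∀ x : Fin 3 → F,
      (Matrix.diagonal x : Matrix (Fin 3) (Fin 3) F)
        ∈ Algebra.adjoin F {(Matrix.diagonal d : Matrix (Fin 3) (Fin 3) F)}) :
    ∃ α : F, α ≠ 0 ∧
      ((minpoly F (Matrix.diagonal d + α • cyc F)).natDegree = 3 ∧
        (minpoly F (Matrix.diagonal d + α • cyc F)).Separable ∧
        Module.finrank F
          (Algebra.adjoin F {Matrix.diagonal d + α • cyc F}) = 3) ∧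
      (∀ S : Submodule F (Matrix (Fin 3) (Fin 3) F),
        (1 : Matrix (Fin 3) (Fin 3) F) ∈ S →
        (∀ x : Fin 3 → F, (Matrix.diagonal x : Matrix (Fin 3) (Fin 3) F) ∈ S) →
        (∀ z ∈ Algebra.adjoin F {Matrix.diagonal d + α • cyc F}, z ∈ S) →
        (∀ a ∈ S, ∀ b ∈ S, a * b * a ∈ S) →
        S = ⊤) := by
  have hd : Function.Injective d := injective_of_diagonal_mem_adjoin hgen
  obtain ⟨α, hα, hsep⟩ :=
    exists_ne_zero_separable_sub_C_pow (derivative_prod_X_sub_C_ne_zero hd) three_pos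
  have hmin := minpoly_diagonal_add_smul_cyc (d := d) hα
  refine ⟨α, hα, ⟨?_, ?_, ?_⟩, fun S _ hdiag hadj hU => ?_⟩
  · rw [hmin, charpoly_natDegree_eq_dim, Fintype.card_fin]
  · rwa [hmin, charpoly_diagonal_add_smul_cyc]
  · rw [Algebra.finrank_adjoin_singleton (.of_finite F _), hmin, charpoly_natDegree_eq_dim,
      Fintype.card_fin]
  · have hcyc : cyc F = α⁻¹ • (diagonal d + α • cyc F - diagonal d) := by
      rw [add_sub_cancel_left, smul_smul, inv_mul_cancel₀ hα, one_smul]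
    refine eq_top_of_diagonal_mem_of_cyc_mem hdiag ?_ hU
    rw [hcyc]
    exact S.smul_mem _ (sub_mem (hadj _ (Algebra.self_mem_adjoin_singleton F _)) (hdiag d))
end
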